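/- Let p_1, ..., p_N ∈ [0,1] be real numbers, partitioned by nodes: for each node u, the probabilities of its incident edges sum to d_u (a positive integer) and u has d_u + k_u incident edges. If the original graph has m = (1/2)∑_u d_u edges and n_p = (1/2)∑_u k_u potential edges, then the total variance ∑_{i=1}^N p_i(1-p_i) is at most m·n_p/(m + n_p). -/

import Mathlib

theorem stmt_7 {V : Type*} [Fintype V] [DecidableEq V] {N : ℕ}
    (p : Fin N → ℝ) (hp0 : ∀ i, 0 ≤ p i) (hp1 : ∀ i, p i ≤ 1)
    (ends : Fin N → Finset V) (hends : ∀ i, (ends i).card = 2)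
    (d k : V → ℕ) (hd : ∀ u, 0 < d u)
    (hsum : ∀ u, ∑ i ∈ Finset.univ.filter (fun i => u ∈ ends i), p i = (d u : ℝ))
    (hcard : ∀ u, (Finset.univ.filter (fun i : Fin N => u ∈ ends i)).card = d u + k u)
    (m np : ℝ)
    (hm : m = (1 / 2) * ∑ u, (d u : ℝ))
    (hnp : np = (1 / 2) * ∑ u, (k u : ℝ)) :
    ∑ i, p i * (1 - p i) ≤ m * np / (m + np) := by
  classical
  by_cases hV : Nonempty V
  · -- double counting lemma
    have dc : ∀ f : Fin N → ℝ,
        ∑ u : V, ∑ i ∈ Finset.univ.filter (fun i => u ∈ ends i), f i = 2 * ∑ i, f i := by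
      intro f
      have : ∀ u : V, ∑ i ∈ Finset.univ.filter (fun i => u ∈ ends i), f i
          = ∑ i : Fin N, if u ∈ ends i then f i else 0 := by
        intro u; rw [Finset.sum_filter]
      simp_rw [this]
      rw [Finset.sum_comm]
      have : ∀ i : Fin N, ∑ u : V, (if u ∈ ends i then f i else 0) = 2 * f i := by
        intro i
        rw [Finset.sum_ite_mem, Finset.univ_inter, Finset.sum_const, hends i]
        simp [two_mul]
      simp_rw [this, ← Finset.mul_sum]
    -- sum of p equals m
    have hsp : ∑ i, p i = m := by
      have := dc p
      rw [hm]
      simp_rw [hsum] at this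
      linarith
    -- m ≥ 1/2, np ≥ 0
    have hdsum : (1 : ℝ) ≤ ∑ u, (d u : ℝ) := by
      obtain ⟨u⟩ := hV
      calc (1 : ℝ) ≤ (d u : ℝ) := by exact_mod_cast hd u
        _ ≤ ∑ u, (d u : ℝ) := Finset.single_le_sum (f := fun v => (d v : ℝ)) (fun v _ => by positivity) (Finset.mem_univ u)
    have hmpos : 0 < m := by rw [hm]; linarith
    have hnp0 : 0 ≤ np := by rw [hnp]; positivity
    have hmn : 0 < m + np := by linarith
    -- per-node Cauchy-Schwarz
    have key : ∀ u : V, ((d u : ℝ)) ^ 2 / ((d u : ℝ) + k u)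
        ≤ ∑ i ∈ Finset.univ.filter (fun i => u ∈ ends i), p i ^ 2 := by
      intro u
      have h1 := sq_sum_le_card_mul_sum_sq
        (s := Finset.univ.filter (fun i : Fin N => u ∈ ends i)) (f := p)
      rw [hsum u, hcard u] at h1
      have hdk : (0 : ℝ) < (d u : ℝ) + k u := by
        have := hd u; positivity
      rw [div_le_iff₀ hdk]
      push_cast at h1 ⊢
      linarith
    -- sum over nodes
    have step2 : m ^ 2 / (m + np) ≤ ∑ i, p i ^ 2 := by
      have h2 : ∑ u, ((d u : ℝ)) ^ 2 / ((d u : ℝ) + k u)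
          ≤ ∑ u : V, ∑ i ∈ Finset.univ.filter (fun i => u ∈ ends i), p i ^ 2 :=
        Finset.sum_le_sum fun u _ => key u
      rw [dc (fun i => p i ^ 2)] at h2
      have h3 : (∑ u, (d u : ℝ)) ^ 2 / (∑ u, ((d u : ℝ) + k u))
          ≤ ∑ u, ((d u : ℝ)) ^ 2 / ((d u : ℝ) + k u) := by
        apply Finset.sq_sum_div_le_sum_sq_div
        intro u _
        have := hd u; positivity
      have h4 : ∑ u, ((d u : ℝ) + k u) = 2 * (m + np) := by
        rw [Finset.sum_add_distrib, hm, hnp]; ring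
      rw [h4] at h3
      have h5 : (∑ u, (d u : ℝ)) ^ 2 = (2 * m) ^ 2 := by rw [hm]; ring
      rw [h5] at h3
      have h6 : (2 * m) ^ 2 / (2 * (m + np)) = 2 * (m ^ 2 / (m + np)) := by
        field_simp
      rw [h6] at h3
      linarith
    have expand : ∑ i, p i * (1 - p i) = (∑ i, p i) - ∑ i, p i ^ 2 := by
      rw [← Finset.sum_sub_distrib]
      congr 1; ext i; ring
    rw [expand, hsp]
    have : m * np / (m + np) = m - m ^ 2 / (m + np) := by
      field_simp; ring
    rw [this]
    linarith
  · -- V empty: no valid edges, both sides zero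
    have hN : ∀ i : Fin N, False := by
      intro i
      have h2 := hends i
      have : ends i = ∅ := Finset.eq_empty_of_forall_notMem fun x _ => hV ⟨x⟩
      rw [this] at h2; simp at h2
    have hL : ∑ i, p i * (1 - p i) = 0 :=
      Finset.sum_eq_zero fun i _ => absurd trivial (fun _ => hN i)
    have hm0 : m = 0 := by
      rw [hm]
      rw [Finset.univ_eq_empty_iff.mpr (not_nonempty_iff.mp hV)]
      simp
    have hnp0 : np = 0 := by
      rw [hnp]
      rw [Finset.univ_eq_empty_iff.mpr (not_nonempty_iff.mp hV)]
      simp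
    rw [hL, hm0, hnp0]
    simp
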